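/- arXiv:2503.00403 — 5 statements merged into one kernel-verified Lean document; each statement's English description precedes it below -/
import Mathlib

section
/- There exists a constant C > 0 such that for all integers n ≥ 2, the supremum over x ∈ [0,1] of |M_n e₁(x) - x| is at most C/n, where e₁(x) = x. -/
/-!
The symmetric shifts `x ± 1/n` cancel on the identity, so `M_n e₁ = e₁` on `[1/n, (n-1)/n]`.
Outside that interval `M_n e₁` is the value `1/n` or `1 - 1/n` at the nearest endpoint, which lies
within `1/n` of every `x ∈ [0,1]` it covers.
-/

open MeasureTheory Filter

/-- The common weight `(2n²/(n(n-1))) x(1-x)` appearing in the Moran operator. -/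
noncomputable def moranW (n : ℕ) (x : ℝ) : ℝ :=
  (2 * (n : ℝ) ^ 2 / ((n : ℝ) * ((n : ℝ) - 1))) * x * (1 - x)

/-- The Moran operator on the middle interval `[1/n, (n-1)/n]`. -/
noncomputable def moranCore (n : ℕ) (f : ℝ → ℝ) (x : ℝ) : ℝ :=
  moranW n x * (f (x - 1 / (n : ℝ)) + f (x + 1 / (n : ℝ))) + (1 - 2 * moranW n x) * f x

/-- The Moran operator `M_n` on `C([0,1])`, extended constantly on `[0,1/n)` and `((n-1)/n,1]`. -/
noncomputable def moran (n : ℕ) (f : ℝ → ℝ) (x : ℝ) : ℝ :=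
  if x < 1 / (n : ℝ) then moranCore n f (1 / (n : ℝ))
  else if ((n : ℝ) - 1) / (n : ℝ) < x then moranCore n f (((n : ℝ) - 1) / (n : ℝ))
  else moranCore n f x

theorem moranCore_id (n : ℕ) (x : ℝ) : moranCore n (fun y => y) x = x := by
  simp only [moranCore]
  ring

theorem abs_moran_id_sub_le {n : ℕ} (hn : 0 < n) {x : ℝ} (hx : x ∈ Set.Icc (0 : ℝ) 1) :
    |moran n (fun y => y) x - x| ≤ 1 / n := by
  obtain ⟨hx0, hx1⟩ := hx
  have hinv : 0 < 1 / (n : ℝ) := by positivity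
  have hupper : ((n : ℝ) - 1) / n = 1 - 1 / n := by field_simp
  unfold moran
  split_ifs with hlow hhigh
  · rw [moranCore_id, abs_of_nonneg (by linarith)]
    linarith
  · rw [moranCore_id, hupper, abs_of_nonpos (by linarith)]
    linarith
  · rw [moranCore_id, sub_self, abs_zero]
    exact hinv.le

theorem moran_id_rate :
    ∃ C > (0 : ℝ), ∀ n : ℕ, 2 ≤ n → ∀ x ∈ Set.Icc (0 : ℝ) 1,
      |moran n (fun y => y) x - x| ≤ C / (n : ℝ) :=
  ⟨1, one_pos, fun _ hn _ hx => abs_moran_id_sub_le (by omega) hx⟩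
end

section
/- For every continuous function f : [0,1] → ℝ, the sequence of functions M_n f converges uniformly on [0,1] to f as n → ∞, i.e. lim_{n→∞} sup_{x ∈ [0,1]} |M_n f(x) − f(x)| = 0. -/
open MeasureTheory Filter

/-!
On `[1/n, 1 - 1/n]` one has `M_n f y - f y = w(y) ((f (y - 1/n) - f y) + (f (y + 1/n) - f y))`
with `0 ≤ w(y) ≤ 1`, and off this interval `M_n f x` is `M_n f` at the nearest endpoint, which
lies within `1/n` of `x`. Hence `|M_n f - f|` is at most three times the oscillation of `f` at
scale `1/n`, which tends to `0` by uniform continuity of `f` on `[0,1]`.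
-/

open Set

variable {n : ℕ}

lemma moranW_mem_Icc (hn : 2 ≤ n) {y : ℝ} (hy : y ∈ Icc (0 : ℝ) 1) :
    moranW n y ∈ Icc (0 : ℝ) 1 := by
  have hn2 : (2 : ℝ) ≤ n := by exact_mod_cast hn
  have hw : moranW n y = 2 * n * (y * (1 - y)) / (n - 1) := by
    unfold moranW; field_simp
  have hy0 : 0 ≤ y * (1 - y) := mul_nonneg hy.1 (by linarith [hy.2])
  rw [hw]
  constructor
  · exact div_nonneg (by positivity) (by linarith)
  · -- `y (1 - y) ≤ 1/4` and `n ≤ 2 (n - 1)`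
    rw [div_le_one (by linarith)]
    nlinarith [sq_nonneg (2 * y - 1)]

lemma abs_moranCore_sub_le (hn : 2 ≤ n) (f : ℝ → ℝ) {y : ℝ} (hy : y ∈ Icc (0 : ℝ) 1) :
    |moranCore n f y - f y| ≤ |f (y - 1 / n) - f y| + |f (y + 1 / n) - f y| := by
  obtain ⟨hw0, hw1⟩ := moranW_mem_Icc hn hy
  have hcore : moranCore n f y - f y =
      moranW n y * ((f (y - 1 / n) - f y) + (f (y + 1 / n) - f y)) := by
    unfold moranCore; ring
  calc |moranCore n f y - f y|
      = moranW n y * |(f (y - 1 / n) - f y) + (f (y + 1 / n) - f y)| := by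
        rw [hcore, abs_mul, abs_of_nonneg hw0]
    _ ≤ 1 * |(f (y - 1 / n) - f y) + (f (y + 1 / n) - f y)| := by gcongr
    _ ≤ |f (y - 1 / n) - f y| + |f (y + 1 / n) - f y| := by
        rw [one_mul]; exact abs_add_le _ _

lemma moran_eq_moranCore_clamp (hn : 2 ≤ n) (f : ℝ → ℝ) (x : ℝ) :
    moran n f x = moranCore n f (max (1 / n) (min x ((n - 1) / n))) := by
  have hn2 : (2 : ℝ) ≤ n := by exact_mod_cast hn
  have hmid : 1 / (n : ℝ) ≤ (n - 1) / n := by gcongr; linarith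
  unfold moran
  split_ifs with hlow hhigh
  · rw [max_eq_left (min_le_left _ _ |>.trans hlow.le)]
  · rw [min_eq_right hhigh.le, max_eq_right hmid]
  · rw [min_eq_left (not_lt.mp hhigh), max_eq_right (not_lt.mp hlow)]

lemma abs_moran_sub_le (hn : 2 ≤ n) {f : ℝ → ℝ} {η : ℝ}
    (hf : ∀ a ∈ Icc (0 : ℝ) 1, ∀ b ∈ Icc (0 : ℝ) 1, |a - b| ≤ 1 / n → |f a - f b| ≤ η)
    {x : ℝ} (hx : x ∈ Icc (0 : ℝ) 1) :
    |moran n f x - f x| ≤ 3 * η := by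
  have hn2 : (2 : ℝ) ≤ n := by exact_mod_cast hn
  have hpos : 0 < 1 / (n : ℝ) := by positivity
  have hstep : 1 / (n : ℝ) ≤ 1 / 2 := by gcongr
  have hsum : ((n : ℝ) - 1) / n = 1 - 1 / n := by field_simp
  set y := max (1 / (n : ℝ)) (min x ((n - 1) / n))
  have hy_lo : 1 / (n : ℝ) ≤ y := le_max_left _ _
  have hy_hi : y ≤ 1 - 1 / n :=
    max_le (by linarith) ((min_le_right _ _).trans hsum.le)
  have hxy : |y - x| ≤ 1 / n := by
    rw [abs_sub_le_iff]; constructor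
    · rw [sub_le_iff_le_add]
      exact max_le (by linarith [hx.1]) ((min_le_left _ _).trans (by linarith))
    · rw [sub_le_comm]
      exact (le_min (by linarith) (by linarith [hx.2])).trans (le_max_right _ _)
  have hy : y ∈ Icc (0 : ℝ) 1 := ⟨by linarith, by linarith⟩
  have hy_sub : y - 1 / n ∈ Icc (0 : ℝ) 1 := ⟨by linarith, by linarith⟩
  have hy_add : y + 1 / n ∈ Icc (0 : ℝ) 1 := ⟨by linarith, by linarith⟩
  rw [moran_eq_moranCore_clamp hn]
  calc |moranCore n f y - f x| ≤ |moranCore n f y - f y| + |f y - f x| := abs_sub_le _ _ _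
    _ ≤ (|f (y - 1 / n) - f y| + |f (y + 1 / n) - f y|) + |f y - f x| := by
        gcongr; exact abs_moranCore_sub_le hn f hy
    _ ≤ (η + η) + η := by
        gcongr
        · exact hf _ hy_sub _ hy (by simp)
        · exact hf _ hy_add _ hy (by simp)
        · exact hf _ hy _ hx hxy
    _ = 3 * η := by ring

theorem moran_uniform_approx (f : ℝ → ℝ) (hf : ContinuousOn f (Set.Icc 0 1)) :
    TendstoUniformlyOn (fun n => moran n f) f atTop (Set.Icc (0 : ℝ) 1) := by
  rw [Metric.tendstoUniformlyOn_iff]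
  intro ε hε
  obtain ⟨δ, hδ, hfδ⟩ := Metric.uniformContinuousOn_iff_le.mp
    (isCompact_Icc.uniformContinuousOn_of_continuous hf) (ε / 4) (by positivity)
  have hsmall : ∀ᶠ n : ℕ in atTop, 1 / (n : ℝ) ≤ δ :=
    tendsto_one_div_atTop_nhds_zero_nat.eventually (ge_mem_nhds hδ)
  filter_upwards [hsmall, eventually_ge_atTop 2] with n hnδ hn x hx
  rw [dist_comm, Real.dist_eq]
  have := abs_moran_sub_le hn (fun a ha b hb hab => hfδ a ha b hb (hab.trans hnδ)) hx
  linarith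
end

section
/- For every f ∈ C³([0,1]) (three times continuously differentiable on [0,1]), every integer n ≥ 2, and every x ∈ [1/n, (n-1)/n], one has |(n(n-1)/4)(M_n f(x) − f(x)) − (1/2) x(1-x) f''(x)| ≤ ‖f'''‖_∞ / (12 n). -/
/-! The Moran operator is a weighted central second difference of step `1/n`:
`(n(n-1)/4)(M_n f(x) - f(x)) = (n²/2) x(1-x) (f(x - 1/n) + f(x + 1/n) - 2 f(x))`.
Expanding both `f(x ± 1/n)` to second order with Lagrange remainders, the first-order terms
cancel and the second-order terms reproduce `(1/2) x(1-x) f''(x)`, leaving an error of at most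
`(n²/2) x(1-x) · ‖f'''‖_∞ / (3n³) ≤ ‖f'''‖_∞ / (24 n)`. -/

open MeasureTheory Filter

open Set
open scoped Nat

theorem Continuous.le_iSup_Icc {g : ℝ → ℝ} (hg : Continuous g) {a b y : ℝ} (hy : y ∈ Icc a b) :
    g y ≤ ⨆ z : Icc a b, g z :=
  le_ciSup (isCompact_range (hg.comp continuous_subtype_val)).bddAbove ⟨y, hy⟩

theorem abs_sub_taylor_le {f : ℝ → ℝ} {n : ℕ} (hf : ContDiff ℝ (n + 1) f) {a b M : ℝ}
    (hM : ∀ y ∈ uIcc a b, |iteratedDeriv (n + 1) f y| ≤ M) :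
    |f b - ∑ k ∈ Finset.range (n + 1), iteratedDeriv k f a * (b - a) ^ k / k !| ≤
      M * |b - a| ^ (n + 1) / (n + 1)! := by
  rcases eq_or_ne a b with rfl | hab
  · simp [Finset.sum_range_succ']
  have hderiv : ∀ k ≤ n + 1, ∀ y ∈ uIcc a b,
      iteratedDerivWithin k f (uIcc a b) y = iteratedDeriv k f y := fun k hk y hy =>
    iteratedDerivWithin_eq_iteratedDeriv (uniqueDiffOn_uIcc hab)
      (hf.of_le (by exact_mod_cast hk)).contDiffAt hy
  have hdiff : DifferentiableOn ℝ (iteratedDerivWithin n f (uIcc a b)) (uIoo a b) :=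
    (hf.differentiable_iteratedDeriv n (by exact_mod_cast n.lt_succ_self)).differentiableOn.congr
      fun y hy => hderiv n n.le_succ y (uIoo_subset_uIcc_self hy)
  obtain ⟨y, hy, hrem⟩ := taylor_mean_remainder_lagrange hab (hf.of_le (by simp)).contDiffOn hdiff
  have htaylor : taylorWithinEval f n (uIcc a b) a b =
      ∑ k ∈ Finset.range (n + 1), iteratedDeriv k f a * (b - a) ^ k / k ! := by
    rw [taylor_within_apply]
    refine Finset.sum_congr rfl fun k hk => ?_
    rw [hderiv k (by simp at hk; omega) a left_mem_uIcc, smul_eq_mul]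
    ring
  rw [← htaylor, hrem, hderiv _ le_rfl y (uIoo_subset_uIcc_self hy), abs_div, abs_mul, abs_pow,
    abs_of_pos (by positivity : (0 : ℝ) < (n + 1)!)]
  gcongr
  exact hM y (uIoo_subset_uIcc_self hy)

theorem abs_sub_taylor_two_le {f : ℝ → ℝ} (hf : ContDiff ℝ 3 f) {a b M : ℝ}
    (hM : ∀ y ∈ uIcc a b, |iteratedDeriv 3 f y| ≤ M) :
    |f b - f a - (b - a) * deriv f a - (b - a) ^ 2 / 2 * iteratedDeriv 2 f a| ≤
      M * |b - a| ^ 3 / 6 := by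
  have h := abs_sub_taylor_le (n := 2) hf hM
  simp only [Finset.sum_range_succ, Finset.sum_range_zero, iteratedDeriv_zero,
    iteratedDeriv_one] at h
  norm_num [Nat.factorial] at h
  convert h using 2
  ring

theorem abs_second_central_difference_sub_le {f : ℝ → ℝ} (hf : ContDiff ℝ 3 f) {x h M : ℝ}
    (hM : ∀ y ∈ uIcc (x - h) (x + h), |iteratedDeriv 3 f y| ≤ M) :
    |f (x - h) + f (x + h) - 2 * f x - h ^ 2 * iteratedDeriv 2 f x| ≤ M * |h| ^ 3 / 3 := by
  have hx : x ∈ uIcc (x - h) (x + h) := by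
    rcases le_total 0 h with h0 | h0
    · exact Icc_subset_uIcc ⟨by linarith, by linarith⟩
    · exact Icc_subset_uIcc' ⟨by linarith, by linarith⟩
  have hback := abs_sub_taylor_two_le hf (b := x - h)
    fun y hy => hM y (uIcc_subset_uIcc hx left_mem_uIcc hy)
  have hfwd := abs_sub_taylor_two_le hf (b := x + h)
    fun y hy => hM y (uIcc_subset_uIcc hx right_mem_uIcc hy)
  simp only [sub_sub_cancel_left, add_sub_cancel_left, abs_neg, neg_sq] at hback hfwd
  calc |f (x - h) + f (x + h) - 2 * f x - h ^ 2 * iteratedDeriv 2 f x|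
      = |(f (x - h) - f x - -h * deriv f x - h ^ 2 / 2 * iteratedDeriv 2 f x) +
          (f (x + h) - f x - h * deriv f x - h ^ 2 / 2 * iteratedDeriv 2 f x)| := by ring_nf
    _ ≤ M * |h| ^ 3 / 6 + M * |h| ^ 3 / 6 := (abs_add_le _ _).trans (add_le_add hback hfwd)
    _ = M * |h| ^ 3 / 3 := by ring

theorem moran_of_mem_Icc {n : ℕ} (f : ℝ → ℝ) {x : ℝ}
    (hx : x ∈ Icc (1 / (n : ℝ)) (((n : ℝ) - 1) / (n : ℝ))) : moran n f x = moranCore n f x := by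
  rw [moran, if_neg (not_lt.2 hx.1), if_neg (not_lt.2 hx.2)]

theorem moranCore_sub_self_sub {n : ℕ} (hn : 2 ≤ n) (f : ℝ → ℝ) (x c : ℝ) :
    ((n : ℝ) * ((n : ℝ) - 1) / 4) * (moranCore n f x - f x) - (1 / 2) * x * (1 - x) * c =
      (n : ℝ) ^ 2 / 2 * (x * (1 - x)) *
        (f (x - 1 / n) + f (x + 1 / n) - 2 * f x - (1 / n) ^ 2 * c) := by
  have hn' : (2 : ℝ) ≤ n := by exact_mod_cast hn
  have hn0 : (n : ℝ) ≠ 0 := by positivity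
  have hn1 : (n : ℝ) - 1 ≠ 0 := by linarith
  rw [moranCore, moranW]
  field_simp
  ring

theorem moran_voronovskaya_rate (f : ℝ → ℝ) (hf : ContDiff ℝ 3 f)
    (n : ℕ) (hn : 2 ≤ n) (x : ℝ)
    (hx : x ∈ Set.Icc (1 / (n : ℝ)) (((n : ℝ) - 1) / (n : ℝ))) :
    |((n : ℝ) * ((n : ℝ) - 1) / 4) * (moran n f x - f x)
        - (1 / 2) * x * (1 - x) * iteratedDeriv 2 f x| ≤
      (⨆ y : Set.Icc (0 : ℝ) 1, |iteratedDeriv 3 f y|) / (12 * (n : ℝ)) := by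
  set M := ⨆ y : Icc (0 : ℝ) 1, |iteratedDeriv 3 f y|
  have hn0 : (0 : ℝ) < n := by positivity
  have hstep : (0 : ℝ) < 1 / n := by positivity
  have hxn : 1 / (n : ℝ) ≤ x ∧ x ≤ 1 - 1 / n := by
    rw [one_sub_div hn0.ne']; exact hx
  have hM : ∀ y ∈ uIcc (x - 1 / n) (x + 1 / n), |iteratedDeriv 3 f y| ≤ M := fun y hy =>
    (hf.continuous_iteratedDeriv 3 le_rfl).abs.le_iSup_Icc
      (uIcc_subset_Icc ⟨by linarith, by linarith⟩ ⟨by linarith, by linarith⟩ hy)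
  have hM0 : 0 ≤ M := (abs_nonneg _).trans (hM x (Icc_subset_uIcc ⟨by linarith, by linarith⟩))
  have hdiff := abs_second_central_difference_sub_le hf hM
  have hvar : x * (1 - x) ≤ 1 / 4 := by nlinarith [sq_nonneg (1 - 2 * x)]
  have hvar0 : 0 ≤ x * (1 - x) := mul_nonneg (by linarith) (by linarith)
  rw [abs_of_pos hstep] at hdiff
  rw [moran_of_mem_Icc f hx, moranCore_sub_self_sub hn, abs_mul, abs_of_nonneg (by positivity)]
  calc _ ≤ (n : ℝ) ^ 2 / 2 * (1 / 4) * (M * (1 / n) ^ 3 / 3) := by gcongr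
    _ = M / (24 * n) := by field_simp; ring
    _ ≤ M / (12 * n) := by gcongr; norm_num
end

section
/- Fix an integer n ≥ 2, a positive integer m, and x ∈ [0,1]. Let Z_k(x) be the rescaled Moran Markov chain on [0,1] started at a point of the grid nearest x, with martingale increments bounded as E[|Z_{j+1} − Z_j|^{2m} | Z_j] ≤ (1/2^{2m-1})(4/(n(n-1)))^m. Then for all 0 ≤ k ≤ ℓ, E[|Z_ℓ(x) − Z_k(x)|^{2m}] ≤ C (4(ℓ−k)/(n(n−1)))^m, where C depends only on m (via the Burkholder–Davis–Gundy constant for exponent 2m) and not on n. -/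
/-!
With `S = Z_j - Z_k` and `Δ = Z_{j+1} - Z_j`, expand `(S + Δ)^{2m}`: the term `2m S^{2m-1} Δ` has
mean zero because `Z` is a martingale, and every other mixed term is at most `S^{2m-2} Δ² + Δ^{2m}`,
the binomial coefficients involved summing to at most `4^m`. Young's inequality
`S^{2m-2} Δ² ≤ ε S^{2m} + ε^{1-m} Δ^{2m}` with `ε = 1/(D(t+1))`, `D = 3·4^m`, then carries
`E (Z_{k+t} - Z_k)^{2m} ≤ (D t)^m (4/(n(n-1)))^m` from `t` to `t+1`.
-/

open MeasureTheory Finset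

lemma pow_mul_pow_le_of_nonneg {M i : ℕ} (hi : i ≤ M) {s d : ℝ} (hs : 0 ≤ s) (hd : 0 ≤ d) :
    s ^ i * d ^ (M + 2 - i) ≤ s ^ M * d ^ 2 + d ^ (M + 2) := by
  rcases le_total s d with h | h
  · calc s ^ i * d ^ (M + 2 - i) ≤ d ^ i * d ^ (M + 2 - i) := by gcongr
      _ = d ^ (M + 2) := by rw [← pow_add]; congr 1; omega
      _ ≤ s ^ M * d ^ 2 + d ^ (M + 2) := le_add_of_nonneg_left (by positivity)
  · calc s ^ i * d ^ (M + 2 - i) = s ^ i * (d ^ (M - i) * d ^ 2) := by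
          rw [← pow_add]; congr 2; omega
      _ ≤ s ^ i * (s ^ (M - i) * d ^ 2) := by gcongr
      _ = s ^ M * d ^ 2 := by rw [← mul_assoc, ← pow_add]; congr 2; omega
      _ ≤ s ^ M * d ^ 2 + d ^ (M + 2) := le_add_of_nonneg_right (by positivity)

lemma pow_mul_pow_le_of_le {m i : ℕ} (hi : i ≤ 2 * m) (s d : ℝ) :
    s ^ i * d ^ (2 * m + 2 - i) ≤ s ^ (2 * m) * d ^ 2 + d ^ (2 * m + 2) := by
  calc s ^ i * d ^ (2 * m + 2 - i) ≤ |s| ^ i * |d| ^ (2 * m + 2 - i) := by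
        rw [← abs_pow, ← abs_pow, ← abs_mul]; exact le_abs_self _
    _ ≤ |s| ^ (2 * m) * |d| ^ 2 + |d| ^ (2 * m + 2) :=
        pow_mul_pow_le_of_nonneg hi (abs_nonneg s) (abs_nonneg d)
    _ = s ^ (2 * m) * d ^ 2 + d ^ (2 * m + 2) := by
        rw [(even_two_mul m).pow_abs, sq_abs, ((even_two_mul m).add even_two).pow_abs]

lemma sum_range_choose_le_four_pow (m : ℕ) :
    ∑ i ∈ range (2 * m + 1), ((2 * m + 2).choose i : ℝ) ≤ 4 ^ (m + 1) := by
  have h : ∑ i ∈ range (2 * m + 1), (2 * m + 2).choose i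
      ≤ ∑ i ∈ range (2 * m + 2 + 1), (2 * m + 2).choose i :=
    sum_le_sum_of_subset (range_subset_range.2 (by omega))
  rw [Nat.sum_range_choose, show 2 * m + 2 = 2 * (m + 1) by ring, pow_mul] at h
  exact_mod_cast h

lemma add_pow_even_le (m : ℕ) (s d : ℝ) :
    (s + d) ^ (2 * m + 2) ≤ s ^ (2 * m + 2) + (2 * m + 2) * s ^ (2 * m + 1) * d
      + 4 ^ (m + 1) * (s ^ (2 * m) * d ^ 2 + d ^ (2 * m + 2)) := by
  have hlow : ∑ i ∈ range (2 * m + 1), s ^ i * d ^ (2 * m + 2 - i) * ((2 * m + 2).choose i : ℝ)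
      ≤ 4 ^ (m + 1) * (s ^ (2 * m) * d ^ 2 + d ^ (2 * m + 2)) := calc
    _ ≤ ∑ i ∈ range (2 * m + 1),
          ((2 * m + 2).choose i : ℝ) * (s ^ (2 * m) * d ^ 2 + d ^ (2 * m + 2)) := by
        refine sum_le_sum fun i hi => ?_
        rw [mul_comm]
        exact mul_le_mul_of_nonneg_left
          (pow_mul_pow_le_of_le (by rw [mem_range] at hi; omega) s d) (Nat.cast_nonneg _)
    _ ≤ _ := by
        rw [← sum_mul]
        have : 0 ≤ s ^ (2 * m) * d ^ 2 + d ^ (2 * m + 2) :=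
          add_nonneg (mul_nonneg ((even_two_mul m).pow_nonneg s) (sq_nonneg d))
            (((even_two_mul m).add even_two).pow_nonneg d)
        exact mul_le_mul_of_nonneg_right (sum_range_choose_le_four_pow m) this
  rw [add_pow, sum_range_succ, sum_range_succ, Nat.choose_succ_self_right, Nat.choose_self,
    show 2 * m + 2 - (2 * m + 1) = 1 by omega, Nat.sub_self]
  push_cast
  linarith

lemma pow_mul_le_mul_pow_succ_add (m : ℕ) {u v ε : ℝ} (hu : 0 ≤ u) (hv : 0 ≤ v) (hε : 0 < ε) :
    u ^ m * v ≤ ε * u ^ (m + 1) + (ε ^ m)⁻¹ * v ^ (m + 1) := by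
  rcases le_total (ε * u) v with h | h
  · calc u ^ m * v = (ε ^ m)⁻¹ * ((ε * u) ^ m * v) := by rw [mul_pow]; field_simp
      _ ≤ (ε ^ m)⁻¹ * (v ^ m * v) := by gcongr
      _ ≤ ε * u ^ (m + 1) + (ε ^ m)⁻¹ * v ^ (m + 1) := by
          rw [← pow_succ]; exact le_add_of_nonneg_left (by positivity)
  · calc u ^ m * v ≤ u ^ m * (ε * u) := by gcongr
      _ = ε * u ^ (m + 1) := by ring
      _ ≤ ε * u ^ (m + 1) + (ε ^ m)⁻¹ * v ^ (m + 1) := le_add_of_nonneg_right (by positivity)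

lemma add_pow_even_le_of_pos (m : ℕ) (s d : ℝ) {ε : ℝ} (hε : 0 < ε) :
    (s + d) ^ (2 * m + 2) ≤ s ^ (2 * m + 2) + (2 * m + 2) * s ^ (2 * m + 1) * d
      + 4 ^ (m + 1) * (ε * s ^ (2 * m + 2) + ((ε ^ m)⁻¹ + 1) * d ^ (2 * m + 2)) := by
  have hyoung : s ^ (2 * m) * d ^ 2 ≤ ε * s ^ (2 * m + 2) + (ε ^ m)⁻¹ * d ^ (2 * m + 2) := by
    have h := pow_mul_le_mul_pow_succ_add m (sq_nonneg s) (sq_nonneg d) hε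
    simp only [← pow_mul, mul_add_one] at h
    exact h
  calc (s + d) ^ (2 * m + 2) ≤ _ := add_pow_even_le m s d
    _ ≤ _ := by
        have := mul_le_mul_of_nonneg_left hyoung (by positivity : (0 : ℝ) ≤ 4 ^ (m + 1))
        linarith

lemma pow_succ_mul_add_le {m : ℕ} {A X : ℝ} (hA : 0 ≤ A) (hX : 0 ≤ X) (hT : 1 ≤ X + 3 * A) :
    X ^ (m + 1) * (1 + A / (X + 3 * A)) + A * ((X + 3 * A) ^ m + 1) ≤ (X + 3 * A) ^ (m + 1) := by
  set T := X + 3 * A with hT_def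
  have hXT : X ≤ T := by linarith
  have h1 : X ^ (m + 1) ≤ T ^ m * X := by rw [pow_succ]; gcongr
  have h2 : X ^ (m + 1) * (A / T) ≤ A * T ^ m := calc
    X ^ (m + 1) * (A / T) ≤ T ^ (m + 1) * (A / T) := by gcongr
    _ = A * T ^ m := by field_simp; ring
  have h3 : A ≤ A * T ^ m := le_mul_of_one_le_right hA (one_le_pow₀ hT)
  have h4 : T ^ (m + 1) = T ^ m * X + 3 * (A * T ^ m) := by rw [pow_succ, hT_def]; ring
  nlinarith

lemma le_pow_mul_of_moment_recursion (m : ℕ) {y : ℕ → ℝ} {b : ℝ} (hb : 0 ≤ b) (h0 : y 0 ≤ 0)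
    (hstep : ∀ t, ∀ ε > 0, y (t + 1) ≤ y t + 4 ^ (m + 1) * (ε * y t + ((ε ^ m)⁻¹ + 1) * b))
    (t : ℕ) : y t ≤ (3 * 4 ^ (m + 1) * t) ^ (m + 1) * b := by
  induction t with
  | zero => simpa using h0
  | succ t ih =>
    set A : ℝ := 4 ^ (m + 1)
    set T : ℝ := 3 * A * t + 3 * A with hT
    have hT1 : 1 ≤ T := by
      have : 1 ≤ A := one_le_pow₀ (by norm_num)
      have : (0 : ℝ) ≤ t := t.cast_nonneg
      nlinarith
    calc y (t + 1) ≤ y t + A * (T⁻¹ * y t + (((T⁻¹) ^ m)⁻¹ + 1) * b) :=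
          hstep t T⁻¹ (by positivity)
      _ = y t * (1 + A / T) + A * (T ^ m + 1) * b := by rw [inv_pow, inv_inv]; ring
      _ ≤ (3 * A * t) ^ (m + 1) * b * (1 + A / T) + A * (T ^ m + 1) * b := by gcongr
      _ = ((3 * A * t) ^ (m + 1) * (1 + A / T) + A * (T ^ m + 1)) * b := by ring
      _ ≤ T ^ (m + 1) * b := by
          gcongr
          exact pow_succ_mul_add_le (by positivity) (by positivity) hT1
      _ = (3 * A * ((t + 1 : ℕ) : ℝ)) ^ (m + 1) * b := by rw [hT]; push_cast; ring

namespace MeasureTheory.Martingale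

variable {Ω ι : Type*} {m0 : MeasurableSpace Ω} {μ : Measure Ω} [IsFiniteMeasure μ]

theorem integral_mul_sub_eq_zero [Preorder ι] {ℱ : Filtration ι m0} {f : ι → Ω → ℝ}
    (hf : Martingale f ℱ μ) {i j : ι} (hij : i ≤ j) {g : Ω → ℝ}
    (hg : StronglyMeasurable[ℱ i] g) {c : ℝ} (hgc : ∀ ω, |g ω| ≤ c) :
    ∫ ω, g ω * (f j ω - f i ω) ∂μ = 0 := by
  have hint : ∀ l, Integrable (fun ω => g ω * f l ω) μ := fun l =>
    (hf.integrable l).bdd_mul (hg.mono (ℱ.le i)).aestronglyMeasurable (ae_of_all _ hgc)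
  have hpull : μ[g * f j | ℱ i] =ᵐ[μ] g * f i := by
    filter_upwards [condExp_mul_of_stronglyMeasurable_left hg (hint j) (hf.integrable j),
      hf.condExp_ae_eq hij] with ω h1 h2
    simp only [h1, Pi.mul_apply, h2]
  calc ∫ ω, g ω * (f j ω - f i ω) ∂μ
      = ∫ ω, (μ[g * f j | ℱ i]) ω ∂μ - ∫ ω, g ω * f i ω ∂μ := by
        simp_rw [mul_sub]
        rw [integral_sub (hint j) (hint i), integral_condExp (ℱ.le i)]
        rfl
    _ = 0 := by rw [integral_congr_ae hpull, sub_eq_zero]; rfl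

variable {ℱ : Filtration ℕ m0} {Z : ℕ → Ω → ℝ} {R : ℝ}

theorem integrable_sub_pow_mul_sub_pow (hZ : Martingale Z ℱ μ) (hR : ∀ i ω, |Z i ω| ≤ R)
    (a b c d p r : ℕ) : Integrable (fun ω => (Z a ω - Z b ω) ^ p * (Z c ω - Z d ω) ^ r) μ := by
  have hmeas : ∀ i, AEStronglyMeasurable (Z i) μ := fun i =>
    (hZ.integrable i).aestronglyMeasurable
  have hdiff : ∀ i l ω, |Z i ω - Z l ω| ≤ 2 * R := fun i l ω => by
    linarith [abs_sub (Z i ω) (Z l ω), hR i ω, hR l ω]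
  refine Integrable.of_bound (by fun_prop) ((2 * R) ^ p * (2 * R) ^ r) (ae_of_all _ fun ω => ?_)
  have h2R : 0 ≤ 2 * R := (abs_nonneg _).trans (hdiff 0 0 ω)
  rw [Real.norm_eq_abs, abs_mul, abs_pow, abs_pow]
  exact mul_le_mul (pow_le_pow_left₀ (abs_nonneg _) (hdiff a b ω) p)
    (pow_le_pow_left₀ (abs_nonneg _) (hdiff c d ω) r) (by positivity) (pow_nonneg h2R p)

theorem integral_sub_pow_succ_le (hZ : Martingale Z ℱ μ) (hR : ∀ i ω, |Z i ω| ≤ R) {k j : ℕ}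
    (hkj : k ≤ j) (m : ℕ) {ε : ℝ} (hε : 0 < ε) :
    ∫ ω, (Z (j + 1) ω - Z k ω) ^ (2 * m + 2) ∂μ ≤ ∫ ω, (Z j ω - Z k ω) ^ (2 * m + 2) ∂μ
      + 4 ^ (m + 1) * (ε * ∫ ω, (Z j ω - Z k ω) ^ (2 * m + 2) ∂μ
        + ((ε ^ m)⁻¹ + 1) * ∫ ω, (Z (j + 1) ω - Z j ω) ^ (2 * m + 2) ∂μ) := by
  have hpow : ∀ a b p, Integrable (fun ω => (Z a ω - Z b ω) ^ p) μ := fun a b p => by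
    simpa using hZ.integrable_sub_pow_mul_sub_pow hR a b a b p 0
  have hS := hpow j k (2 * m + 2)
  have hΔ := hpow (j + 1) j (2 * m + 2)
  have hSΔ : Integrable (fun ω => (Z j ω - Z k ω) ^ (2 * m + 1) * (Z (j + 1) ω - Z j ω)) μ := by
    simpa using hZ.integrable_sub_pow_mul_sub_pow hR j k (j + 1) j (2 * m + 1) 1
  have hcross : ∫ ω, (Z j ω - Z k ω) ^ (2 * m + 1) * (Z (j + 1) ω - Z j ω) ∂μ = 0 := by
    refine hZ.integral_mul_sub_eq_zero j.le_succ
      (((hZ.stronglyMeasurable j).sub ((hZ.stronglyMeasurable k).mono (ℱ.mono hkj))).pow _)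
      (c := (2 * R) ^ (2 * m + 1)) fun ω => ?_
    rw [abs_pow]
    gcongr
    linarith [abs_sub (Z j ω) (Z k ω), hR j ω, hR k ω]
  have hpt : ∀ ω, (Z (j + 1) ω - Z k ω) ^ (2 * m + 2) ≤ (Z j ω - Z k ω) ^ (2 * m + 2)
      + (2 * m + 2) * ((Z j ω - Z k ω) ^ (2 * m + 1) * (Z (j + 1) ω - Z j ω))
      + 4 ^ (m + 1) * (ε * (Z j ω - Z k ω) ^ (2 * m + 2)
        + ((ε ^ m)⁻¹ + 1) * (Z (j + 1) ω - Z j ω) ^ (2 * m + 2)) := fun ω => by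
    rw [← mul_assoc, ← sub_add_sub_cancel' (Z j ω)]
    exact add_pow_even_le_of_pos m _ _ hε
  calc ∫ ω, (Z (j + 1) ω - Z k ω) ^ (2 * m + 2) ∂μ
      ≤ ∫ ω, ((Z j ω - Z k ω) ^ (2 * m + 2)
        + (2 * m + 2) * ((Z j ω - Z k ω) ^ (2 * m + 1) * (Z (j + 1) ω - Z j ω))
        + 4 ^ (m + 1) * (ε * (Z j ω - Z k ω) ^ (2 * m + 2)
          + ((ε ^ m)⁻¹ + 1) * (Z (j + 1) ω - Z j ω) ^ (2 * m + 2))) ∂μ :=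
        integral_mono (hpow _ _ _)
          ((hS.add (hSΔ.const_mul _)).add (((hS.const_mul _).add (hΔ.const_mul _)).const_mul _)) hpt
    _ = _ := by
        rw [integral_add, integral_add, integral_const_mul, integral_const_mul, integral_add,
          integral_const_mul, integral_const_mul, hcross, mul_zero, add_zero]
        exacts [hS.const_mul _, hΔ.const_mul _, hS, hSΔ.const_mul _, hS.add (hSΔ.const_mul _),
          ((hS.const_mul _).add (hΔ.const_mul _)).const_mul _]

theorem integral_sub_pow_le (hZ : Martingale Z ℱ μ) (hR : ∀ i ω, |Z i ω| ≤ R) (m : ℕ) {b : ℝ}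
    (hinc : ∀ j, ∫ ω, (Z (j + 1) ω - Z j ω) ^ (2 * m + 2) ∂μ ≤ b) (k t : ℕ) :
    ∫ ω, (Z (k + t) ω - Z k ω) ^ (2 * m + 2) ∂μ ≤ (3 * 4 ^ (m + 1) * t) ^ (m + 1) * b := by
  have hb : 0 ≤ b :=
    (integral_nonneg fun ω => ((even_two_mul m).add even_two).pow_nonneg _).trans (hinc 0)
  refine le_pow_mul_of_moment_recursion
    (y := fun t => ∫ ω, (Z (k + t) ω - Z k ω) ^ (2 * m + 2) ∂μ) m hb (by simp) (fun t ε hε => ?_) t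
  calc ∫ ω, (Z (k + t + 1) ω - Z k ω) ^ (2 * m + 2) ∂μ
      ≤ _ := hZ.integral_sub_pow_succ_le hR (k.le_add_right t) m hε
    _ ≤ _ := by gcongr; exact hinc _

end MeasureTheory.Martingale

theorem moran_moment_bound_BDG (m : ℕ) (hm : 0 < m) :
    ∃ C > (0 : ℝ), ∀ (n : ℕ), 2 ≤ n →
      ∀ (Ω : Type) [MeasurableSpace Ω] (μ : Measure Ω), IsProbabilityMeasure μ →
      ∀ (𝒢 : Filtration ℕ ‹MeasurableSpace Ω›) (Z : ℕ → Ω → ℝ),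
        Martingale Z 𝒢 μ →
        (∀ k ω, Z k ω ∈ Set.Icc (0 : ℝ) 1) →
        (∀ j, ∀ᵐ ω ∂μ,
          (μ[fun ω' => |Z (j + 1) ω' - Z j ω'| ^ (2 * m)|𝒢 j]) ω ≤
            (1 / 2 ^ (2 * m - 1)) * (4 / ((n : ℝ) * ((n : ℝ) - 1))) ^ m) →
        ∀ k ℓ : ℕ, k ≤ ℓ →
          ∫ ω, |Z ℓ ω - Z k ω| ^ (2 * m) ∂μ ≤
            C * (4 * ((ℓ : ℝ) - (k : ℝ)) / ((n : ℝ) * ((n : ℝ) - 1))) ^ m := by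
  obtain ⟨m, rfl⟩ := Nat.exists_eq_add_one.2 hm
  refine ⟨(3 * 4 ^ (m + 1)) ^ (m + 1), by positivity,
    fun n hn Ω _ μ _ 𝒢 Z hZ hZ01 hcond k ℓ hkℓ => ?_⟩
  set a : ℝ := 4 / ((n : ℝ) * ((n : ℝ) - 1))
  have ha : 0 ≤ a := by
    have : (2 : ℝ) ≤ n := by exact_mod_cast hn
    exact div_nonneg (by norm_num) (by nlinarith)
  have habs : ∀ i l ω, |Z i ω - Z l ω| ^ (2 * (m + 1)) = (Z i ω - Z l ω) ^ (2 * m + 2) :=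
    fun i l ω => (even_two_mul (m + 1)).pow_abs _
  have hinc : ∀ j, ∫ ω, (Z (j + 1) ω - Z j ω) ^ (2 * m + 2) ∂μ ≤ a ^ (m + 1) := fun j => calc
    _ = ∫ ω, (μ[fun ω' => |Z (j + 1) ω' - Z j ω'| ^ (2 * (m + 1))|𝒢 j]) ω ∂μ := by
        rw [integral_condExp (𝒢.le j)]; simp only [habs]
    _ ≤ ∫ _, 1 / 2 ^ (2 * (m + 1) - 1) * a ^ (m + 1) ∂μ :=
        integral_mono_ae integrable_condExp (integrable_const _) (hcond j)
    _ ≤ a ^ (m + 1) := by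
        rw [integral_const, probReal_univ, one_smul]
        exact mul_le_of_le_one_left (by positivity) (div_le_one_of_le₀ (one_le_pow₀ one_le_two)
          (by positivity))
  have hR : ∀ i ω, |Z i ω| ≤ 1 := fun i ω => abs_le.2 ⟨by linarith [(hZ01 i ω).1], (hZ01 i ω).2⟩
  have hmoment := hZ.integral_sub_pow_le hR m hinc k (ℓ - k)
  rw [Nat.add_sub_cancel' hkℓ] at hmoment
  calc ∫ ω, |Z ℓ ω - Z k ω| ^ (2 * (m + 1)) ∂μ
      = ∫ ω, (Z ℓ ω - Z k ω) ^ (2 * m + 2) ∂μ := by simp only [habs]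
    _ ≤ _ := hmoment
    _ = _ := by rw [Nat.cast_sub hkℓ, ← mul_pow, ← mul_pow]; ring
end

section
/- For a,b real with 0 ≤ s ≤ t and a piecewise-linear interpolation estimate: if a process satisfies E[|Z_ℓ − Z_k|^{2m}] ≤ C(4(ℓ−k)/(n(n−1)))^m on grid points k ≤ ℓ, then its linear interpolation Z_t := Z_{⌊n(n−1)t/4⌋} + (n(n−1)t/4 − ⌊n(n−1)t/4⌋)(Z_{⌊n(n−1)t/4⌋+1} − Z_{⌊n(n−1)t/4⌋}) satisfies E[|Z_t − Z_s|^{2m}] ≤ C' (t − s)^m for all 0 ≤ s ≤ t, with C' depending only on C and m. -/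
/-
Write `x = n(n-1)s/4`, `y = n(n-1)t/4` and `a = ⌊x⌋`, `b = ⌊y⌋`. If `a = b` the increment of the
interpolated path is `(y - x)` times one grid increment, whose `2m`-th moment is at most `C (4/(n(n-1)))^m`;
as `y - x ≤ 1`, `(y - x)^{2m} ≤ (y - x)^m` and the claim follows. If `a < b` the increment splits
into a fractional piece of the cell of `y`, the grid increment `Z_b - Z_{a+1}` and a fractional piece
of the cell of `x`, each of whose `2m`-th moments is at most `C (t - s)^m`; the three are recombined
with `|u + v + w|^{2m} ≤ 3^{2m-1} (|u|^{2m} + |v|^{2m} + |w|^{2m})`.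
-/

open MeasureTheory

/-- Linear interpolation of a discrete-time process along the Moran time scale. -/
noncomputable def interp {Ω : Type*} (n : ℕ) (Z : ℕ → Ω → ℝ) (t : ℝ) (ω : Ω) : ℝ :=
  Z ⌊(n : ℝ) * ((n : ℝ) - 1) * t / 4⌋₊ ω +
    ((n : ℝ) * ((n : ℝ) - 1) * t / 4 - ⌊(n : ℝ) * ((n : ℝ) - 1) * t / 4⌋₊) *
      (Z (⌊(n : ℝ) * ((n : ℝ) - 1) * t / 4⌋₊ + 1) ω - Z ⌊(n : ℝ) * ((n : ℝ) - 1) * t / 4⌋₊ ω)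

lemma abs_add_three_pow_le {p : ℕ} (hp : 0 < p) (u v w : ℝ) :
    |u + v + w| ^ p ≤ 3 ^ (p - 1) * (|u| ^ p + |v| ^ p + |w| ^ p) := by
  obtain ⟨n, rfl⟩ := Nat.exists_eq_succ_of_ne_zero hp.ne'
  have jensen := pow_sum_le_card_mul_sum_pow (s := Finset.univ) (f := ![|u|, |v|, |w|])
    (fun i _ => by fin_cases i <;> simp) n
  simp only [Fin.sum_univ_three, Finset.card_univ, Fintype.card_fin, Matrix.cons_val] at jensen
  calc |u + v + w| ^ (n + 1) ≤ (|u| + |v| + |w|) ^ (n + 1) :=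
        pow_le_pow_left₀ (abs_nonneg _) (abs_add_three u v w) _
    _ ≤ _ := jensen

noncomputable def linInterp (z : ℕ → ℝ) (x : ℝ) : ℝ :=
  z ⌊x⌋₊ + (x - ⌊x⌋₊) * (z (⌊x⌋₊ + 1) - z ⌊x⌋₊)

lemma linInterp_sub_of_floor_eq (z : ℕ → ℝ) {x y : ℝ} (h : ⌊x⌋₊ = ⌊y⌋₊) :
    linInterp z y - linInterp z x = (y - x) * (z (⌊x⌋₊ + 1) - z ⌊x⌋₊) := by
  rw [linInterp, linInterp, h]
  ring

lemma linInterp_sub_eq (z : ℕ → ℝ) (x y : ℝ) :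
    linInterp z y - linInterp z x =
      (y - ⌊y⌋₊) * (z (⌊y⌋₊ + 1) - z ⌊y⌋₊) + (z ⌊y⌋₊ - z (⌊x⌋₊ + 1)) +
        (⌊x⌋₊ + 1 - x) * (z (⌊x⌋₊ + 1) - z ⌊x⌋₊) := by
  rw [linInterp, linInterp]
  ring

section Moments

variable {Ω : Type*} [MeasurableSpace Ω] {μ : Measure Ω} {Z : ℕ → Ω → ℝ} {p q : ℕ} {K : ℝ}

lemma integral_abs_mul_sub_succ_pow_le (hqp : q ≤ p) (hK : 0 ≤ K)
    (hmom : ∀ k ℓ : ℕ, k ≤ ℓ → ∫ ω, |Z ℓ ω - Z k ω| ^ p ∂μ ≤ K * ((ℓ : ℝ) - k) ^ q)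
    {c d : ℝ} (hc0 : 0 ≤ c) (hc1 : c ≤ 1) (hcd : c ≤ d) (k : ℕ) :
    ∫ ω, |c * (Z (k + 1) ω - Z k ω)| ^ p ∂μ ≤ K * d ^ q := by
  have step : ∫ ω, |Z (k + 1) ω - Z k ω| ^ p ∂μ ≤ K := by
    simpa using hmom k (k + 1) k.le_succ
  simp_rw [abs_mul, mul_pow, abs_of_nonneg hc0]
  rw [integral_const_mul]
  calc c ^ p * ∫ ω, |Z (k + 1) ω - Z k ω| ^ p ∂μ ≤ c ^ p * K := by gcongr
    _ ≤ c ^ q * K := mul_le_mul_of_nonneg_right (pow_le_pow_of_le_one hc0 hc1 hqp) hK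
    _ ≤ K * d ^ q := by rw [mul_comm]; gcongr

lemma integral_abs_linInterp_sub_pow_le_of_floor_eq (hqp : q ≤ p) (hK : 0 ≤ K)
    (hmom : ∀ k ℓ : ℕ, k ≤ ℓ → ∫ ω, |Z ℓ ω - Z k ω| ^ p ∂μ ≤ K * ((ℓ : ℝ) - k) ^ q)
    {x y : ℝ} (hx : 0 ≤ x) (hxy : x ≤ y) (h : ⌊x⌋₊ = ⌊y⌋₊) :
    ∫ ω, |linInterp (Z · ω) y - linInterp (Z · ω) x| ^ p ∂μ ≤ K * (y - x) ^ q := by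
  have hyx : y - x ≤ 1 := by
    have hxa := Nat.floor_le hx
    have hya := Nat.lt_floor_add_one y
    rw [← h] at hya
    linarith
  simp_rw [linInterp_sub_of_floor_eq _ h]
  exact integral_abs_mul_sub_succ_pow_le hqp hK hmom (sub_nonneg.2 hxy) hyx le_rfl _

lemma integral_abs_linInterp_sub_pow_le_of_floor_lt (hp : 0 < p) (hqp : q ≤ p) (hK : 0 ≤ K)
    (hint : ∀ k ℓ : ℕ, Integrable (fun ω => |Z ℓ ω - Z k ω| ^ p) μ)
    (hmom : ∀ k ℓ : ℕ, k ≤ ℓ → ∫ ω, |Z ℓ ω - Z k ω| ^ p ∂μ ≤ K * ((ℓ : ℝ) - k) ^ q)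
    {x y : ℝ} (hx : 0 ≤ x) (h : ⌊x⌋₊ < ⌊y⌋₊) :
    ∫ ω, |linInterp (Z · ω) y - linInterp (Z · ω) x| ^ p ∂μ ≤ 3 ^ p * K * (y - x) ^ q := by
  have hy : 0 ≤ y := zero_le_one.trans (Nat.floor_pos.1 (Nat.zero_lt_of_lt h))
  have hxa := Nat.floor_le hx
  have hxa' := Nat.lt_floor_add_one x
  have hyb := Nat.floor_le hy
  have hab : (⌊x⌋₊ + 1 : ℝ) ≤ ⌊y⌋₊ := by exact_mod_cast h
  have integrable_mul (c : ℝ) (k : ℕ) :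
      Integrable (fun ω => |c * (Z (k + 1) ω - Z k ω)| ^ p) μ := by
    simp_rw [abs_mul, mul_pow]
    exact (hint k (k + 1)).const_mul _
  have hend := integral_abs_mul_sub_succ_pow_le (μ := μ) hqp hK hmom
    (c := y - ⌊y⌋₊) (d := y - x) (by linarith) (by linarith [Nat.lt_floor_add_one y])
    (by linarith) ⌊y⌋₊
  have hstart := integral_abs_mul_sub_succ_pow_le (μ := μ) hqp hK hmom
    (c := ⌊x⌋₊ + 1 - x) (d := y - x) (by linarith) (by linarith) (by linarith) ⌊x⌋₊
  have hmid : ∫ ω, |Z ⌊y⌋₊ ω - Z (⌊x⌋₊ + 1) ω| ^ p ∂μ ≤ K * (y - x) ^ q := by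
    refine (hmom _ _ h).trans ?_
    push_cast
    gcongr
  calc ∫ ω, |linInterp (Z · ω) y - linInterp (Z · ω) x| ^ p ∂μ
      ≤ ∫ ω, 3 ^ (p - 1) * (|(y - ⌊y⌋₊) * (Z (⌊y⌋₊ + 1) ω - Z ⌊y⌋₊ ω)| ^ p
          + |Z ⌊y⌋₊ ω - Z (⌊x⌋₊ + 1) ω| ^ p
          + |(⌊x⌋₊ + 1 - x) * (Z (⌊x⌋₊ + 1) ω - Z ⌊x⌋₊ ω)| ^ p) ∂μ := by
        refine integral_mono_of_nonneg (ae_of_all _ fun ω => by positivity)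
          ((((integrable_mul _ _).add (hint _ _)).add (integrable_mul _ _)).const_mul _)
          (ae_of_all _ fun ω => ?_)
        simp only [linInterp_sub_eq]
        exact abs_add_three_pow_le hp _ _ _
    _ = 3 ^ (p - 1) * ((∫ ω, |(y - ⌊y⌋₊) * (Z (⌊y⌋₊ + 1) ω - Z ⌊y⌋₊ ω)| ^ p ∂μ)
          + (∫ ω, |Z ⌊y⌋₊ ω - Z (⌊x⌋₊ + 1) ω| ^ p ∂μ)
          + ∫ ω, |(⌊x⌋₊ + 1 - x) * (Z (⌊x⌋₊ + 1) ω - Z ⌊x⌋₊ ω)| ^ p ∂μ) := by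
        rw [integral_const_mul, integral_add _ (integrable_mul _ _),
          integral_add (integrable_mul _ _) (hint _ _)]
        exact (integrable_mul _ _).add (hint _ _)
    _ ≤ 3 ^ (p - 1) * (3 * (K * (y - x) ^ q)) := by gcongr; linarith
    _ = 3 ^ p * K * (y - x) ^ q := by
        rw [← mul_assoc, ← pow_succ, Nat.sub_add_cancel hp, mul_assoc]

theorem integral_abs_linInterp_sub_pow_le (hp : 0 < p) (hqp : q ≤ p) (hK : 0 ≤ K)
    (hint : ∀ k ℓ : ℕ, Integrable (fun ω => |Z ℓ ω - Z k ω| ^ p) μ)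
    (hmom : ∀ k ℓ : ℕ, k ≤ ℓ → ∫ ω, |Z ℓ ω - Z k ω| ^ p ∂μ ≤ K * ((ℓ : ℝ) - k) ^ q)
    {x y : ℝ} (hx : 0 ≤ x) (hxy : x ≤ y) :
    ∫ ω, |linInterp (Z · ω) y - linInterp (Z · ω) x| ^ p ∂μ ≤ 3 ^ p * K * (y - x) ^ q := by
  rcases (Nat.floor_mono hxy).eq_or_lt with h | h
  · calc _ ≤ K * (y - x) ^ q :=
          integral_abs_linInterp_sub_pow_le_of_floor_eq hqp hK hmom hx hxy h
      _ ≤ 3 ^ p * K * (y - x) ^ q := by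
          rw [mul_assoc]
          exact le_mul_of_one_le_left (by positivity) (one_le_pow₀ (by norm_num))
  · exact integral_abs_linInterp_sub_pow_le_of_floor_lt hp hqp hK hint hmom hx h

end Moments

theorem interp_moment_bound (m : ℕ) (hm : 0 < m) (C : ℝ) (hC : 0 < C) :
    ∃ C' > (0 : ℝ), ∀ (n : ℕ), 2 ≤ n →
      ∀ (Ω : Type) [MeasurableSpace Ω] (μ : Measure Ω), IsProbabilityMeasure μ →
      ∀ (Z : ℕ → Ω → ℝ), (∀ k, Measurable (Z k)) →
        (∀ k ω, Z k ω ∈ Set.Icc (0 : ℝ) 1) →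
        (∀ k ℓ : ℕ, k ≤ ℓ →
          ∫ ω, |Z ℓ ω - Z k ω| ^ (2 * m) ∂μ ≤
            C * (4 * ((ℓ : ℝ) - (k : ℝ)) / ((n : ℝ) * ((n : ℝ) - 1))) ^ m) →
        ∀ s t : ℝ, 0 ≤ s → s ≤ t →
          ∫ ω, |interp n Z t ω - interp n Z s ω| ^ (2 * m) ∂μ ≤ C' * (t - s) ^ m := by
  refine ⟨3 ^ (2 * m) * C, by positivity, fun n hn Ω _ μ _ Z hZ hZ01 hmom s t hs hst => ?_⟩
  have hr : 0 < (n : ℝ) * ((n : ℝ) - 1) := by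
    have : (2 : ℝ) ≤ n := by exact_mod_cast hn
    nlinarith
  set r := (n : ℝ) * ((n : ℝ) - 1)
  have hint (k ℓ : ℕ) : Integrable (fun ω => |Z ℓ ω - Z k ω| ^ (2 * m)) μ := by
    refine .of_bound (((hZ ℓ).sub (hZ k)).abs.pow_const _).aestronglyMeasurable 1
      (ae_of_all _ fun ω => ?_)
    obtain ⟨hℓ0, hℓ1⟩ := hZ01 ℓ ω
    obtain ⟨hk0, hk1⟩ := hZ01 k ω
    rw [Real.norm_of_nonneg (by positivity)]
    exact pow_le_one₀ (abs_nonneg _) (abs_sub_le_iff.2 ⟨by linarith, by linarith⟩)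
  have hmom' (k ℓ : ℕ) (hkℓ : k ≤ ℓ) :
      ∫ ω, |Z ℓ ω - Z k ω| ^ (2 * m) ∂μ ≤ C * (4 / r) ^ m * ((ℓ : ℝ) - k) ^ m := by
    rw [mul_assoc, ← mul_pow, div_mul_eq_mul_div]
    exact hmom k ℓ hkℓ
  have hscale : 4 / r * (r * t / 4 - r * s / 4) = t - s := by field_simp
  -- `interp n Z t ω` is `linInterp (Z · ω) (r * t / 4)` by definition.
  calc ∫ ω, |interp n Z t ω - interp n Z s ω| ^ (2 * m) ∂μ
      ≤ 3 ^ (2 * m) * (C * (4 / r) ^ m) * (r * t / 4 - r * s / 4) ^ m :=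
        integral_abs_linInterp_sub_pow_le (by omega) (by omega) (by positivity) hint hmom'
          (by positivity) (by gcongr)
    _ = 3 ^ (2 * m) * C * (t - s) ^ m := by rw [← hscale, mul_pow]; ring
end
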